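/- Let F be a homogeneous form of degree d, let (I₁,I₂,τ) be an index tuple with the singular integral convergent, and let (I₁',I₂',τ') be the dual tuple given by I₁' = I₂, I₂' = I₁ and τ' = τ. Then 𝒥_{(I₁',I₂',τ')}(0) = (−1)^{|τ|} · 𝒥_{(I₁,I₂,τ)}(0). Moreover, if P is irrational (or if τ_i > 0 for all i ∈ I₁∪I₂), then 𝔖_{(I₁',I₂',τ')}(P, 0) = (−1)^{|τ|} · 𝔖_{(I₁,I₂,τ)}(P, 0). -/

import Mathlib

open MeasureTheory Finset Asymptotics Filter
open scoped Classical

noncomputable section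

/-- `e(x) = e^{2πix}`. -/
def eC (x : ℝ) : ℂ := Complex.exp (2 * Real.pi * Complex.I * x)

/-- Periodic Bernoulli polynomial `β_l(x) = B_l({x})`. -/
def pB (l : ℕ) (x : ℝ) : ℝ := Polynomial.aeval (Int.fract x) (Polynomial.bernoulli l)

variable {s : ℕ}

/-- Evaluation of an integer polynomial at a real point. -/
def evalR (F : MvPolynomial (Fin s) ℤ) (x : Fin s → ℝ) : ℝ := MvPolynomial.aeval x F

/-- Partial derivative in direction `i` of a complex-valued function. -/
def pdC (i : Fin s) (f : (Fin s → ℝ) → ℂ) : (Fin s → ℝ) → ℂ :=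
  fun x => deriv (fun t => f (Function.update x i t)) (x i)

/-- Mixed partial derivative `∂_x^τ`. -/
def mpdC (τ : Fin s → ℕ) (f : (Fin s → ℝ) → ℂ) : (Fin s → ℝ) → ℂ :=
  (List.finRange s).foldr (fun i g => (pdC i)^[τ i] g) f

/-- Partial derivative in direction `i` of a real-valued function. -/
def pdR (i : Fin s) (f : (Fin s → ℝ) → ℝ) : (Fin s → ℝ) → ℝ :=
  fun x => deriv (fun t => f (Function.update x i t)) (x i)

/-- Mixed partial derivative `∂_x^τ` of a real-valued function. -/
def mpdR (τ : Fin s → ℕ) (f : (Fin s → ℝ) → ℝ) : (Fin s → ℝ) → ℝ :=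
  (List.finRange s).foldr (fun i g => (pdR i)^[τ i] g) f

/-- The index set `I₃ = {1,…,s} ∖ (I₁ ∪ I₂)`. -/
def I3F (I₁ I₂ : Finset (Fin s)) : Finset (Fin s) := Finset.univ \ (I₁ ∪ I₂)

/-- `σ_{a,b}`: fill the coordinates in `I₁` with `b`, those in `I₂` with `a`,
and those in `I₃` with the free variables `y`. -/
def fillS (I₁ I₂ : Finset (Fin s)) (a b : Fin s → ℝ)
    (y : {i : Fin s // i ∈ I3F I₁ I₂} → ℝ) : Fin s → ℝ :=
  fun i => if h : i ∈ I3F I₁ I₂ then y ⟨i, h⟩ else if i ∈ I₁ then b i else a i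

/-- `J_{(I₁,I₂,τ)}(γ)`. -/
def JInt (F : MvPolynomial (Fin s) ℤ) (I₁ I₂ : Finset (Fin s)) (τ : Fin s → ℕ)
    (a b : Fin s → ℝ) (γ : ℝ) : ℂ :=
  ∫ y : {i : Fin s // i ∈ I3F I₁ I₂} → ℝ in
      Set.univ.pi (fun i => Set.Icc (a i.1) (b i.1)),
    mpdC τ (fun x => eC (γ * evalR F x)) (fillS I₁ I₂ a b y)

/-- The generalized singular integral `𝒥_{(I₁,I₂,τ)}(m)`. -/
def calJ (F : MvPolynomial (Fin s) ℤ) (I₁ I₂ : Finset (Fin s)) (τ : Fin s → ℕ)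
    (a b : Fin s → ℝ) (m : ℝ) : ℂ :=
  ∫ γ : ℝ, JInt F I₁ I₂ τ a b γ * eC (-(γ * m))

/-- The truncated singular integral `𝒥_{(I₁,I₂,τ)}(m; Q)`. -/
def calJTrunc (F : MvPolynomial (Fin s) ℤ) (I₁ I₂ : Finset (Fin s)) (τ : Fin s → ℕ)
    (a b : Fin s → ℝ) (m Q : ℝ) : ℂ :=
  ∫ γ in Set.Icc (-Q) Q, JInt F I₁ I₂ τ a b γ * eC (-(γ * m))

/-- The exponential sum `S_{(I₁,I₂,τ)}(P; r, q)`. -/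
def wSum (F : MvPolynomial (Fin s) ℤ) (I₁ I₂ : Finset (Fin s)) (τ : Fin s → ℕ)
    (a b : Fin s → ℝ) (P : ℝ) (r q : ℕ) : ℂ :=
  ∑ z : Fin s → Fin q,
    eC ((r : ℝ) / (q : ℝ) * evalR F (fun i => ((z i : ℕ) : ℝ))) *
      ((((∏ i ∈ I₁, (-1 : ℝ) ^ (τ i + 1) / (Nat.factorial (τ i + 1) : ℝ) *
            pB (τ i + 1) ((P * b i - ((z i : ℕ) : ℝ)) / (q : ℝ))) *
        ∏ i ∈ I₂, (-1 : ℝ) ^ (τ i) / (Nat.factorial (τ i + 1) : ℝ) *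
            pB (τ i + 1) ((P * a i - ((z i : ℕ) : ℝ)) / (q : ℝ))) : ℝ) : ℂ)

/-- The summand over `q` in the singular series. -/
def ssTerm (F : MvPolynomial (Fin s) ℤ) (I₁ I₂ : Finset (Fin s)) (τ : Fin s → ℕ)
    (a b : Fin s → ℝ) (P : ℝ) (n : ℤ) (q : ℕ) : ℂ :=
  ∑ r ∈ (Finset.Icc 1 q).filter (fun r => Nat.Coprime r q),
    (q : ℂ) ^ (-(((I3F I₁ I₂).card : ℤ)) + ∑ i, (τ i : ℤ)) *
      wSum F I₁ I₂ τ a b P r q * eC (-((r : ℝ) / (q : ℝ) * (n : ℝ)))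

/-- The generalized singular series `𝔖_{(I₁,I₂,τ)}(P,n)`. -/
def singSeries (F : MvPolynomial (Fin s) ℤ) (I₁ I₂ : Finset (Fin s)) (τ : Fin s → ℕ)
    (a b : Fin s → ℝ) (P : ℝ) (n : ℤ) : ℂ :=
  ∑' q : ℕ, ssTerm F I₁ I₂ τ a b P n q

/-- Absolute convergence of the singular series. -/
def ssAbsConv (F : MvPolynomial (Fin s) ℤ) (I₁ I₂ : Finset (Fin s)) (τ : Fin s → ℕ)
    (a b : Fin s → ℝ) (P : ℝ) (n : ℤ) : Prop :=
  Summable (fun q : ℕ =>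
    ∑ r ∈ (Finset.Icc 1 q).filter (fun r => Nat.Coprime r q),
      ‖(q : ℂ) ^ (-(((I3F I₁ I₂).card : ℤ)) + ∑ i, (τ i : ℤ)) *
        wSum F I₁ I₂ τ a b P r q * eC (-((r : ℝ) / (q : ℝ) * (n : ℝ)))‖)

/-- The truncated singular series `𝔖_{(I₁,I₂,τ)}(P,n;Q)`. -/
def ssTrunc (F : MvPolynomial (Fin s) ℤ) (I₁ I₂ : Finset (Fin s)) (τ : Fin s → ℕ)
    (a b : Fin s → ℝ) (P : ℝ) (n : ℤ) (Q : ℝ) : ℂ :=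
  ∑ q ∈ Finset.Icc 1 ⌊Q⌋₊, ssTerm F I₁ I₂ τ a b P n q

/-- Integer points of the dilated box `P·B`, `B = ∏ (aᵢ, bᵢ]`. -/
def boxPts (a b : Fin s → ℝ) (P : ℝ) : Finset (Fin s → ℤ) :=
  Fintype.piFinset (fun i => Finset.Icc (⌊P * a i⌋ + 1) ⌊P * b i⌋)

/-- The exponential sum `S(α) = ∑_{x ∈ ℤ^s ∩ PB} e(αF(x))`. -/
def SBox (F : MvPolynomial (Fin s) ℤ) (a b : Fin s → ℝ) (P α : ℝ) : ℂ :=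
  ∑ x ∈ boxPts a b P, eC (α * evalR F (fun i => ((x i : ℤ) : ℝ)))

/-- The counting function `R_B(P,n)`. -/
def RBox (F : MvPolynomial (Fin s) ℤ) (a b : Fin s → ℝ) (P : ℝ) (n : ℤ) : ℕ :=
  ((boxPts a b P).filter (fun x => MvPolynomial.eval x F = n)).card

/-- Membership in the index set `I(K)`. -/
def memIK (K : ℕ) (I₁ I₂ : Finset (Fin s)) (τ : Fin s → ℕ) : Prop :=
  Disjoint I₁ I₂ ∧ (∀ i, i ∉ I₁ ∪ I₂ → τ i = 0) ∧ I₁.card + I₂.card + ∑ i, τ i < K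

/-- The (Krull) dimension of the variety cut out by all partial derivatives of `G`. -/
def jacDim {ι : Type} (G : MvPolynomial ι ℂ) : WithBot ℕ∞ :=
  ringKrullDim (MvPolynomial ι ℂ ⧸
    Ideal.span (Set.range fun i : ι => MvPolynomial.pderiv i G))

/-- `dim V*`, the dimension of the affine singular locus of `F = 0`. -/
def singDim (F : MvPolynomial (Fin s) ℤ) : WithBot ℕ∞ :=
  jacDim (MvPolynomial.map (Int.castRingHom ℂ) F)

/-- Substituting `x_i := b_i` for `i ∈ I₁` and `x_i := a_i` for `i ∈ I₂` into `F`,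
viewed as a polynomial in the variables `x_{I₃}`. -/
def sigmaSubst (I₁ I₂ : Finset (Fin s)) (a b : Fin s → ℝ) (F : MvPolynomial (Fin s) ℤ) :
    MvPolynomial {i : Fin s // i ∈ I3F I₁ I₂} ℝ :=
  MvPolynomial.aeval
    (fun i : Fin s => if h : i ∈ I3F I₁ I₂ then MvPolynomial.X ⟨i, h⟩
      else if i ∈ I₁ then MvPolynomial.C (b i) else MvPolynomial.C (a i)) F

/-- `ρ_{(I₁,I₂)}`: the dimension of the singular locus of the degree-`d` part of
`F(σ_{a,b}(x))` in affine `|I₃|`-space. -/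
def rhoDim (I₁ I₂ : Finset (Fin s)) (a b : Fin s → ℝ) (d : ℕ)
    (F : MvPolynomial (Fin s) ℤ) : WithBot ℕ∞ :=
  jacDim (MvPolynomial.map (algebraMap ℝ ℂ)
    (MvPolynomial.homogeneousComponent d (sigmaSubst I₁ I₂ a b F)))

/-- The wide major arc `𝔐'_{r,q}(η)`. -/
def MArcW (d : ℕ) (P η : ℝ) (q r : ℕ) : Set ℝ :=
  {α : ℝ | α ∈ Set.Ico (0 : ℝ) 1 ∧ |(q : ℝ) * α - (r : ℝ)| ≤ (q : ℝ) * P ^ (η - (d : ℝ))}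

/-- The wide major arcs `𝔐'(η)`. -/
def MArcsW (d : ℕ) (P η : ℝ) : Set ℝ :=
  ⋃ q ∈ Finset.Icc 1 ⌊P ^ η⌋₊, ⋃ r ∈ (Finset.Icc 1 q).filter (fun r => Nat.Coprime r q),
    MArcW d P η q r

/-- The narrow major arc `𝔐_{r,q}(θ)`. -/
def MArcN (d : ℕ) (P θ : ℝ) (q r : ℕ) : Set ℝ :=
  {α : ℝ | α ∈ Set.Ico (0 : ℝ) 1 ∧ |(q : ℝ) * α - (r : ℝ)| ≤ P ^ (θ - (d : ℝ))}

/-- The narrow major arcs `𝔐(θ)`. -/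
def MArcsN (d : ℕ) (P θ : ℝ) : Set ℝ :=
  ⋃ q ∈ Finset.Icc 1 ⌊P ^ θ⌋₊, ⋃ r ∈ (Finset.Icc 1 q).filter (fun r => Nat.Coprime r q),
    MArcN d P θ q r

/-- The minor arcs `𝔪(θ) = [0,1) ∖ 𝔐(θ)`. -/
def minorArcs (d : ℕ) (P θ : ℝ) : Set ℝ := Set.Ico (0 : ℝ) 1 \ MArcsN d P θ

/-- Fill the coordinates in `I₃` with `y`, leaving the remaining ones free (`w`). -/
def fillW (I₁ I₂ : Finset (Fin s)) (w : Fin s → ℝ)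
    (y : {i : Fin s // i ∈ I3F I₁ I₂} → ℝ) : Fin s → ℝ :=
  fun i => if h : i ∈ I3F I₁ I₂ then y ⟨i, h⟩ else w i

/-- `J_{(I₁,I₂,τ)}(γ; x_{I₁}, x_{I₂})` with free variables on `I₁ ∪ I₂`. -/
def JFree (F : MvPolynomial (Fin s) ℤ) (I₁ I₂ : Finset (Fin s)) (τ : Fin s → ℕ)
    (a b : Fin s → ℝ) (γ : ℝ) (w : Fin s → ℝ) : ℂ :=
  ∫ y : {i : Fin s // i ∈ I3F I₁ I₂} → ℝ in
      Set.univ.pi (fun i => Set.Icc (a i.1) (b i.1)),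
    mpdC τ (fun x => eC (γ * evalR F x)) (fillW I₁ I₂ w y)

/-- `𝒥_{(I₁,I₂,τ)}(n; x_{I₁}, x_{I₂})` with free variables on `I₁ ∪ I₂`. -/
def calJFree (F : MvPolynomial (Fin s) ℤ) (I₁ I₂ : Finset (Fin s)) (τ : Fin s → ℕ)
    (a b : Fin s → ℝ) (n : ℝ) (w : Fin s → ℝ) : ℂ :=
  ∫ γ : ℝ, JFree F I₁ I₂ τ a b γ w * eC (-(γ * n))

/-- The bump function `e^{-(1-x²)^{-1}}` (unnormalised). -/
def omega0 (x : ℝ) : ℝ := if |x| < 1 then Real.exp (-(1 - x ^ 2)⁻¹) else 0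

/-- The normalising constant `c₀`. -/
def omegaC : ℝ := (∫ x : ℝ, omega0 x)⁻¹

/-- The kernel `ω`. -/
def omegaW (x : ℝ) : ℝ := omegaC * omega0 x

/-- The Fourier transform `ω̂(y) = ∫ ω(γ) e(γ y) dγ`. -/
def omegaHat (y : ℝ) : ℂ := ∫ γ : ℝ, (omegaW γ : ℂ) * eC (γ * y)

/-- The modified singular integral `𝒥^T_{(I₁,I₂,τ)}(n; x_{I₁}, x_{I₂})`. -/
def calJT (F : MvPolynomial (Fin s) ℤ) (I₁ I₂ : Finset (Fin s)) (τ : Fin s → ℕ)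
    (a b : Fin s → ℝ) (T n : ℝ) (w : Fin s → ℝ) : ℂ :=
  ∫ γ : ℝ, omegaHat (γ / T) * JFree F I₁ I₂ τ a b γ w * eC (-(γ * n))

/-- Distance to the nearest integer, `‖x‖`. -/
def nint (x : ℝ) : ℝ := |x - (round x : ℤ)|

/-- A pair `(α, q)` is primitive. -/
def IsPrimitivePair (α : ℝ) (q : ℕ) : Prop :=
  ∃ r : ℤ, IsCoprime r (q : ℤ) ∧ nint ((q : ℝ) * α) = |(q : ℝ) * α - (r : ℝ)|

/-- The weight class `𝒮(c, C, m)`. -/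
def inWeightClass (c C : ℝ) (m : ℕ) (ω : (Fin s → ℝ) → ℝ) : Prop :=
  ContDiff ℝ (⊤ : ℕ∞) ω ∧ (∀ x, 0 ≤ ω x) ∧
    Function.support ω ⊆ Set.univ.pi (fun _ : Fin s => Set.Icc (-c) c) ∧
    ∀ κ : Fin s → ℕ, (∑ i, κ i) ≤ m → ∀ x, |mpdR κ ω x| ≤ C

/-- The weighted exponential sum `S_ω(α, P)`. -/
def SW (F : MvPolynomial (Fin s) ℤ) (w : (Fin s → ℝ) → ℝ) (α P : ℝ) : ℂ :=
  ∑' x : Fin s → ℤ, ((w (fun i => ((x i : ℤ) : ℝ) / P) : ℝ) : ℂ) *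
    eC (α * evalR F (fun i => ((x i : ℤ) : ℝ)))

/-- Number of primitive integer points on `F = 0` of height at most `P`
(each rational point of the projective hypersurface is counted twice). -/
def NXcount (F : MvPolynomial (Fin s) ℤ) (P : ℝ) : ℕ :=
  Set.ncard {x : Fin s → ℤ | Finset.univ.gcd x = 1 ∧ MvPolynomial.eval x F = 0 ∧
    ∀ i, |((x i : ℤ) : ℝ)| ≤ P}

/-- The modified singular series `𝔖̃_{(I₁,I₂,τ)}(P)`. -/
def singSeriesMod (F : MvPolynomial (Fin s) ℤ) (I₁ I₂ : Finset (Fin s)) (τ : Fin s → ℕ)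
    (a b : Fin s → ℝ) (d : ℕ) (P : ℝ) : ℂ :=
  (1 / 2 : ℂ) * ∑' m : ℕ, if m = 0 then 0 else
    ((ArithmeticFunction.moebius m : ℤ) : ℂ) *
      (((m : ℝ) ^ (-((s : ℝ) - I₁.card - I₂.card - (∑ i, (τ i : ℝ)) - d)) : ℝ) : ℂ) *
      singSeries F I₁ I₂ τ a b (P / (m : ℝ)) 0

/-- `σ_{a,b}` for a labelling `c : Fin s → Fin 4` of `{1,…,s}` into the four classes
`I₁ (c = 0)`, `I₂ (c = 1)`, `I₃ (c = 2)`, `I₄ (c = 3)`. -/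
def fill4 (c : Fin s → Fin 4) (a b : Fin s → ℝ)
    (y : {i : Fin s // c i = 2 ∨ c i = 3} → ℝ) : Fin s → ℝ :=
  fun i => if h : c i = 2 ∨ c i = 3 then y ⟨i, h⟩ else if c i = 0 then b i else a i

/-- The counting function `r(t, Q!, n)` (statement 17). -/
def rcount (F : MvPolynomial (Fin s) ℤ) (i₀ : Fin s) (Q : ℕ) (n t : ℤ) : ℕ :=
  (Finset.univ.filter (fun z : Fin s → Fin (Nat.factorial Q) =>
    Int.ModEq (Nat.factorial Q : ℤ) ((z i₀ : ℕ) : ℤ) t ∧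
    Int.ModEq (Nat.factorial Q : ℤ) (MvPolynomial.eval (fun i => ((z i : ℕ) : ℤ)) F) n)).card

/-- The constant `ϱ_{(I₁,I₂,τ)}` (statement 16). -/
def rhoFactor (I₁ I₂ : Finset (Fin s)) (τ : Fin s → ℕ) : ℝ :=
  (-1 : ℝ) ^ I₂.card * ∏ i ∈ I₁ ∪ I₂, (-1 : ℝ) ^ (τ i + 1) / (Nat.factorial (τ i + 1) : ℝ)

end


-- ===== auxiliary lemmas =====
noncomputable section Aux
open Polynomial MeasureTheory

theorem bern_reflect (n : ℕ) :
    (Polynomial.bernoulli n).comp (1 - Polynomial.X) = (-1 : ℚ) ^ n • Polynomial.bernoulli n := by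
  induction n using Nat.strong_induction_on with
  | _ n ih =>
    rcases Nat.eq_zero_or_pos n with h0 | h0
    · subst h0; simp [Polynomial.bernoulli_zero]
    have hder : derivative ((Polynomial.bernoulli n).comp (1 - X) -
        (-1 : ℚ) ^ n • Polynomial.bernoulli n) = 0 := by
      rw [derivative_sub, derivative_comp, Polynomial.derivative_bernoulli,
        derivative_smul, Polynomial.derivative_bernoulli, mul_comp, natCast_comp,
        ih (n-1) (Nat.sub_lt h0 one_pos)]
      have hpow : (-1 : ℚ) ^ n = (-1) ^ (n - 1) * (-1) := by
        conv_lhs => rw [show n = (n - 1) + 1 by omega]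
        rw [pow_succ]
      simp only [derivative_sub, derivative_one, derivative_X, zero_sub, hpow,
        Polynomial.smul_eq_C_mul, map_mul, map_pow, map_neg, map_one]
      ring
    have hC := Polynomial.eq_C_of_derivative_eq_zero hder
    have h0eval : ((Polynomial.bernoulli n).comp (1 - X) -
        (-1 : ℚ) ^ n • Polynomial.bernoulli n).eval 0 = 0 := by
      simp only [eval_sub, eval_comp, eval_one, eval_X, sub_zero,
        Polynomial.bernoulli_eval_one, eval_smul, Polynomial.bernoulli_eval_zero, smul_eq_mul]
      rw [_root_.bernoulli]
      have h1 : ((-1 : ℚ) ^ n) ^ 2 = 1 := by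
        rw [← pow_mul, mul_comm, pow_mul]; simp
      rw [← mul_assoc, ← sq, h1, one_mul, sub_self]
    have hc0 : (((Polynomial.bernoulli n).comp (1 - X) -
        (-1 : ℚ) ^ n • Polynomial.bernoulli n)).coeff 0 = 0 := by
      have := h0eval
      rw [hC] at this
      simpa using this
    rw [hc0, map_zero] at hC
    exact sub_eq_zero.mp hC

theorem eC_zero : eC 0 = 1 := by simp [eC]

theorem eC_add_int (x : ℝ) (m : ℤ) : eC (x + m) = eC x := by
  simp only [eC]
  rw [show ((x + m : ℝ) : ℂ) = (x : ℂ) + (m : ℂ) by push_cast; ring, mul_add,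
    Complex.exp_add]
  rw [show 2 * Real.pi * Complex.I * ((m:ℤ):ℂ) = (m : ℤ) * (2 * Real.pi * Complex.I) by ring,
    Complex.exp_int_mul_two_pi_mul_I, mul_one]

theorem pB_add_int (l : ℕ) (x : ℝ) (m : ℤ) : pB l (x + m) = pB l x := by
  simp [pB, Int.fract_add_intCast]

theorem pB_neg (l : ℕ) (x : ℝ) (h : Int.fract x ≠ 0 ∨ 2 ≤ l) :
    pB l (-x) = (-1 : ℝ) ^ l * pB l x := by
  rcases eq_or_ne (Int.fract x) 0 with hf | hf
  · rcases h with h | h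
    · exact absurd hf h
    have hx : Int.fract (-x) = 0 := by
      rw [Int.fract_eq_iff] at hf ⊢
      obtain ⟨-, -, z, hz⟩ := hf
      exact ⟨le_refl 0, one_pos, -z, by rw [sub_zero] at hz ⊢; rw [hz]; push_cast; ring⟩
    rcases Nat.even_or_odd l with he | ho
    · simp [pB, hf, hx, he.neg_one_pow]
    · have hodd : _root_.bernoulli l = 0 := by
        rw [_root_.bernoulli, bernoulli'_eq_zero_of_odd ho (by omega)]; ring
      simp only [pB, hf, hx]
      rw [show ((0:ℝ)) = algebraMap ℚ ℝ 0 by simp, Polynomial.aeval_algebraMap_apply]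
      simp [Polynomial.bernoulli_eval_zero, hodd]
  · have hneg : Int.fract (-x) = 1 - Int.fract x := Int.fract_neg hf
    have h2 := congrArg (Polynomial.aeval (Int.fract x) : ℚ[X] → ℝ) (bern_reflect l)
    rw [Polynomial.aeval_comp] at h2
    simp only [map_sub, map_one, Polynomial.aeval_X, _root_.map_smul] at h2
    rw [pB, pB, hneg, h2, Rat.smul_def]
    push_cast
    ring

theorem eval_neg_of_homog {σ : Type*} {R : Type*} [CommRing R] {G : MvPolynomial σ R} {d : ℕ}
    (hG : G.IsHomogeneous d) (x : σ → R) :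
    MvPolynomial.eval (fun i => - x i) G = (-1 : R) ^ d * MvPolynomial.eval x G := by
  rw [MvPolynomial.eval_eq, MvPolynomial.eval_eq, Finset.mul_sum]
  apply Finset.sum_congr rfl
  intro m hm
  have hdeg : m.degree = d := by
    by_contra h
    exact (MvPolynomial.mem_support_iff.mp hm) (hG.coeff_eq_zero h)
  have : ∏ i ∈ m.support, (-x i) ^ m i
      = (-1 : R) ^ d * ∏ i ∈ m.support, (x i) ^ m i := by
    rw [← hdeg, Finsupp.degree_apply, ← Finset.prod_pow_eq_pow_sum, ← Finset.prod_mul_distrib]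
    apply Finset.prod_congr rfl
    intro i _
    rw [neg_pow]
  rw [this]; ring

theorem evalR_int {s : ℕ} (F : MvPolynomial (Fin s) ℤ) (x : Fin s → ℤ) :
    evalR F (fun i => ((x i : ℤ) : ℝ)) = ((MvPolynomial.eval x F : ℤ) : ℝ) := by
  rw [evalR, MvPolynomial.aeval_def, show ((MvPolynomial.eval x F : ℤ) : ℝ)
      = (Int.castRingHom ℝ) (MvPolynomial.eval x F) from rfl,
    MvPolynomial.eval, show ((MvPolynomial.eval₂Hom (RingHom.id ℤ) x) F)
      = MvPolynomial.eval₂ (RingHom.id ℤ) x F from rfl,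
    MvPolynomial.eval₂_comp_left (Int.castRingHom ℝ)]
  rfl

theorem eval_modEq {σ : Type*} (F : MvPolynomial σ ℤ) (q : ℕ) (x y : σ → ℤ)
    (h : ∀ i, x i ≡ y i [ZMOD (q:ℤ)]) :
    MvPolynomial.eval x F ≡ MvPolynomial.eval y F [ZMOD (q:ℤ)] := by
  have hcast : ∀ z : σ → ℤ, ((MvPolynomial.eval z F : ℤ) : ZMod q)
      = MvPolynomial.eval₂ (Int.castRingHom (ZMod q)) (fun i => ((z i : ℤ) : ZMod q)) F := by
    intro z
    rw [show ((MvPolynomial.eval z F : ℤ) : ZMod q)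
        = (Int.castRingHom (ZMod q)) (MvPolynomial.eval z F) from rfl,
      MvPolynomial.eval, show ((MvPolynomial.eval₂Hom (RingHom.id ℤ) z) F)
        = MvPolynomial.eval₂ (RingHom.id ℤ) z F from rfl,
      MvPolynomial.eval₂_comp_left (Int.castRingHom (ZMod q))]
    rfl
  have hxy : (fun i => ((x i : ℤ) : ZMod q)) = fun i => ((y i : ℤ) : ZMod q) := by
    funext i
    exact (ZMod.intCast_eq_intCast_iff _ _ _).mpr (h i)
  apply (ZMod.intCast_eq_intCast_iff _ _ _).mp
  rw [hcast, hcast, hxy]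

theorem evalR_neg {s d : ℕ} {F : MvPolynomial (Fin s) ℤ} (hF : F.IsHomogeneous d)
    (v : Fin s → ℝ) : evalR F (-v) = (-1 : ℝ) ^ d * evalR F v := by
  have hmap : ∀ w : Fin s → ℝ, evalR F w
      = MvPolynomial.eval w (MvPolynomial.map (Int.castRingHom ℝ) F) := by
    intro w
    rw [evalR, MvPolynomial.aeval_def, MvPolynomial.eval_map]
    rfl
  rw [hmap, hmap, show (-v) = fun i => -(v i) from rfl,
    eval_neg_of_homog (hF.map (Int.castRingHom ℝ))]

theorem pdC_const_mul {s : ℕ} (i : Fin s) (c : ℂ) (f : (Fin s → ℝ) → ℂ) :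
    pdC i (fun x => c * f x) = fun x => c * pdC i f x := by
  funext x
  simp only [pdC]
  rw [deriv_const_mul_field]

theorem pdC_iter_const_mul {s : ℕ} (i : Fin s) (k : ℕ) (c : ℂ) (f : (Fin s → ℝ) → ℂ) :
    (pdC i)^[k] (fun x => c * f x) = fun x => c * (pdC i)^[k] f x := by
  induction k generalizing f with
  | zero => simp
  | succ k ih =>
    rw [Function.iterate_succ_apply, pdC_const_mul, ih]
    simp [Function.iterate_succ_apply]

theorem pdC_comp_neg {s : ℕ} (i : Fin s) (f : (Fin s → ℝ) → ℂ) :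
    pdC i (fun x => f (-x)) = fun x => -(pdC i f (-x)) := by
  funext x
  simp only [pdC]
  have hupd : ∀ t : ℝ, -(Function.update x i t) = Function.update (-x) i (-t) := by
    intro t
    funext j
    rcases eq_or_ne j i with rfl | hj
    · simp
    · simp [Function.update_of_ne hj]
  have h1 : (fun t => f (-(Function.update x i t)))
      = fun t => f (Function.update (-x) i (-t)) := by
    funext t; rw [hupd]
  rw [h1, deriv_comp_neg (f := fun u => f (Function.update (-x) i u)) (x i)]
  simp

theorem pdC_iter_comp_neg {s : ℕ} (i : Fin s) (k : ℕ) (f : (Fin s → ℝ) → ℂ) :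
    (pdC i)^[k] (fun x => f (-x)) = fun x => (-1 : ℂ) ^ k * (pdC i)^[k] f (-x) := by
  induction k generalizing f with
  | zero => simp
  | succ k ih =>
    rw [Function.iterate_succ_apply, pdC_comp_neg, show (fun x => -(pdC i f (-x)))
        = fun x => (-1 : ℂ) * (fun y => (pdC i f) (-y)) x by funext x; ring,
      pdC_iter_const_mul, ih (pdC i f)]
    funext x
    rw [Function.iterate_succ_apply]
    ring

theorem foldr_comp_neg {s : ℕ} (τ : Fin s → ℕ) (L : List (Fin s)) (f : (Fin s → ℝ) → ℂ) :
    (L.foldr (fun i g => (pdC i)^[τ i] g) (fun x => f (-x)))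
      = fun x => (-1 : ℂ) ^ (L.map τ).sum * (L.foldr (fun i g => (pdC i)^[τ i] g) f) (-x) := by
  induction L generalizing f with
  | nil => simp
  | cons i L ih =>
    rw [List.foldr_cons, ih f, show (fun x => (-1 : ℂ) ^ (L.map τ).sum *
          (L.foldr (fun i g => (pdC i)^[τ i] g) f) (-x))
        = fun x => (-1 : ℂ) ^ (L.map τ).sum *
          ((fun y => (L.foldr (fun i g => (pdC i)^[τ i] g) f) (-y)) x) from rfl,
      pdC_iter_const_mul, pdC_iter_comp_neg]
    funext x
    rw [List.foldr_cons, List.map_cons, List.sum_cons, pow_add]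
    ring

theorem mpdC_comp_neg {s : ℕ} (τ : Fin s → ℕ) (f : (Fin s → ℝ) → ℂ) (x : Fin s → ℝ) :
    mpdC τ f (-x) = (-1 : ℂ) ^ (∑ i, τ i) * mpdC τ (fun y => f (-y)) x := by
  have h := congrFun (foldr_comp_neg τ (List.finRange s) f) x
  have hsum : ((List.finRange s).map τ).sum = ∑ i, τ i := by
    rw [Fin.sum_univ_def]
  rw [mpdC, mpdC, h, hsum, ← mul_assoc, ← pow_add, ← two_mul, pow_mul]
  simp

theorem setIntegral_comp_neg' {ι : Type*} [Fintype ι] (t : Set (ι → ℝ))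
    (ht : ∀ y, -y ∈ t ↔ y ∈ t) (g : (ι → ℝ) → ℂ) :
    ∫ y in t, g (-y) = ∫ y in t, g y := by
  have h1 : MeasurePreserving (fun y : ι → ℝ => -y) volume volume :=
    Measure.measurePreserving_neg volume
  have h2 : MeasurableEmbedding (fun y : ι → ℝ => -y) :=
    (Homeomorph.neg (ι → ℝ)).measurableEmbedding
  have h3 : (fun y : ι → ℝ => -y) ⁻¹' t = t := Set.ext fun y => ht y
  rw [← h3, h1.setIntegral_preimage_emb h2 g t, h3]

/-- generalized fill -/
def fillGen {s : ℕ} (u : Finset (Fin s)) (c : Fin s → ℝ)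
    (y : {i : Fin s // i ∈ u} → ℝ) : Fin s → ℝ :=
  fun i => if h : i ∈ u then y ⟨i, h⟩ else c i

/-- generalized J integral -/
def JIntGen {s : ℕ} (F : MvPolynomial (Fin s) ℤ) (τ : Fin s → ℕ) (u : Finset (Fin s))
    (c : Fin s → ℝ) (γ : ℝ) : ℂ :=
  ∫ y : {i : Fin s // i ∈ u} → ℝ in Set.univ.pi (fun _ => Set.Icc (-1 : ℝ) 1),
    mpdC τ (fun x => eC (γ * evalR F x)) (fillGen u c y)

theorem JIntGen_neg {s d : ℕ} (F : MvPolynomial (Fin s) ℤ) (hF : F.IsHomogeneous d)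
    (τ : Fin s → ℕ) (u : Finset (Fin s)) (c₁ c₂ : Fin s → ℝ)
    (hc : ∀ i, i ∉ u → c₂ i = - c₁ i) (γ : ℝ) :
    JIntGen F τ u c₂ γ
      = (-1 : ℂ) ^ (∑ i, τ i) * JIntGen F τ u c₁ ((-1 : ℝ) ^ d * γ) := by
  have hfill : ∀ y : {i : Fin s // i ∈ u} → ℝ,
      fillGen u c₂ y = -(fillGen u c₁ (-y)) := by
    intro y
    funext i
    by_cases h : i ∈ u
    · simp [fillGen, h]
    · simp [fillGen, h, hc i h]
  have hfun : (fun v : Fin s → ℝ => eC (γ * evalR F (-v)))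
      = fun v => eC (((-1 : ℝ) ^ d * γ) * evalR F v) := by
    funext v
    rw [evalR_neg hF]
    congr 1
    ring
  have hpt : (fun y : {i : Fin s // i ∈ u} → ℝ =>
        mpdC τ (fun x => eC (γ * evalR F x)) (fillGen u c₂ y))
      = fun y => (-1 : ℂ) ^ (∑ i, τ i) *
          (fun z : {i : Fin s // i ∈ u} → ℝ =>
            mpdC τ (fun x => eC (((-1 : ℝ) ^ d * γ) * evalR F x)) (fillGen u c₁ z)) (-y) := by
    funext y
    rw [hfill y, mpdC_comp_neg]
    congr 2
  have hsym : ∀ y : {i : Fin s // i ∈ u} → ℝ,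
      -y ∈ Set.univ.pi (fun _ => Set.Icc (-1 : ℝ) 1)
        ↔ y ∈ Set.univ.pi (fun _ : {i : Fin s // i ∈ u} => Set.Icc (-1 : ℝ) 1) := by
    intro y
    simp only [Set.mem_pi, Set.mem_univ, Pi.neg_apply, Set.mem_Icc, true_implies,
      forall_const]
    constructor <;> intro h i <;> specialize h i <;>
      exact ⟨by linarith [h.1, h.2], by linarith [h.1, h.2]⟩
  rw [JIntGen, JIntGen, hpt, MeasureTheory.integral_const_mul]
  congr 1
  have hres := setIntegral_comp_neg' (Set.univ.pi fun _ => Set.Icc (-1 : ℝ) 1) hsym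
    (fun z => mpdC τ (fun x => eC (((-1 : ℝ) ^ d * γ) * evalR F x)) (fillGen u c₁ z))
  simpa using hres

end Aux


-- ===== series auxiliary lemmas =====
noncomputable section Aux2
open MeasureTheory

/-- negation on Fin q -/
def negFin (q : ℕ) : Fin q → Fin q :=
  fun x => ⟨(q - x.val) % q, Nat.mod_lt _ (lt_of_le_of_lt (Nat.zero_le _) x.isLt)⟩

theorem negFin_invol (q : ℕ) : Function.Involutive (negFin q) := by
  intro x
  rcases Nat.eq_zero_or_pos x.val with h0 | h0
  · apply Fin.ext
    simp [negFin, h0, Nat.mod_self]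
  · apply Fin.ext
    have hx : x.val < q := x.isLt
    have h1 : (q - x.val) % q = q - x.val := Nat.mod_eq_of_lt (by omega)
    simp only [negFin, h1]
    rw [Nat.sub_sub_self (le_of_lt hx), Nat.mod_eq_of_lt hx]

theorem negFin_val (q : ℕ) (x : Fin q) :
    ∃ k : ℤ, (((negFin q x).val : ℕ) : ℤ) = k * q - x.val := by
  have hx : x.val < q := x.isLt
  rcases Nat.eq_zero_or_pos x.val with h0 | h0
  · exact ⟨0, by simp [negFin, h0, Nat.mod_self]⟩
  · refine ⟨1, ?_⟩
    have h1 : (q - x.val) % q = q - x.val := Nat.mod_eq_of_lt (by omega)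
    simp only [negFin, h1]
    push_cast [le_of_lt hx]
    ring

theorem coprime_q_sub {q r : ℕ} (hr : r ≤ q) (h : Nat.Coprime r q) :
    Nat.Coprime (q - r) q := by
  have h1 : IsCoprime (r : ℤ) (q : ℤ) := Int.isCoprime_iff_gcd_eq_one.mpr h
  have h2 : IsCoprime ((q : ℤ) - r) (q : ℤ) := by
    have := (h1.neg_left).add_mul_left_left 1
    rw [mul_one] at this
    rwa [show (q : ℤ) - r = -r + q by ring]
  have h3 : ((q - r : ℕ) : ℤ) = (q : ℤ) - r := by push_cast [hr]; ring
  have h4 : IsCoprime ((q - r : ℕ) : ℤ) ((q : ℕ) : ℤ) := by rw [h3]; exact h2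
  exact Int.isCoprime_iff_gcd_eq_one.mp h4

theorem fract_div_ne_zero {y : ℝ} (hy : Irrational y) (q : ℕ) (hq : q ≠ 0) :
    Int.fract (y / (q : ℝ)) ≠ 0 := by
  intro h0
  have hq' : (q : ℝ) ≠ 0 := Nat.cast_ne_zero.mpr hq
  have h1 : y / (q : ℝ) = (⌊y / (q : ℝ)⌋ : ℝ) := by
    have h2 : Int.fract (y / (q : ℝ)) = y / (q : ℝ) - ⌊y / (q : ℝ)⌋ := rfl
    rw [h2] at h0; linarith
  apply hy.ne_int ((q : ℤ) * ⌊y / (q : ℝ)⌋)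
  push_cast
  field_simp at h1
  linarith

theorem pB_shift_b (l : ℕ) (P : ℝ) (q : ℕ) (hq : q ≠ 0) (x w : ℕ) (k : ℤ)
    (hw : (w : ℤ) = k * q - x)
    (hcond : Int.fract ((P * (-1) - (x : ℝ)) / (q : ℝ)) ≠ 0 ∨ 2 ≤ l) :
    pB l ((P * 1 - (w : ℝ)) / (q : ℝ))
      = (-1 : ℝ) ^ l * pB l ((P * (-1) - (x : ℝ)) / (q : ℝ)) := by
  have hq' : (q : ℝ) ≠ 0 := Nat.cast_ne_zero.mpr hq
  have hwR : (w : ℝ) = (k : ℝ) * q - x := by exact_mod_cast hw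
  rw [show (P * 1 - (w : ℝ)) / (q : ℝ)
      = -((P * (-1) - (x : ℝ)) / (q : ℝ)) + ((-k : ℤ) : ℝ) by
    rw [hwR]; push_cast; field_simp; ring]
  rw [pB_add_int, pB_neg _ _ hcond]

theorem pB_shift_a (l : ℕ) (P : ℝ) (q : ℕ) (hq : q ≠ 0) (x w : ℕ) (k : ℤ)
    (hw : (w : ℤ) = k * q - x)
    (hcond : Int.fract ((P * 1 - (x : ℝ)) / (q : ℝ)) ≠ 0 ∨ 2 ≤ l) :
    pB l ((P * (-1) - (w : ℝ)) / (q : ℝ))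
      = (-1 : ℝ) ^ l * pB l ((P * 1 - (x : ℝ)) / (q : ℝ)) := by
  have hq' : (q : ℝ) ≠ 0 := Nat.cast_ne_zero.mpr hq
  have hwR : (w : ℝ) = (k : ℝ) * q - x := by exact_mod_cast hw
  rw [show (P * (-1) - (w : ℝ)) / (q : ℝ)
      = -((P * 1 - (x : ℝ)) / (q : ℝ)) + ((-k : ℤ) : ℝ) by
    rw [hwR]; push_cast; field_simp; ring]
  rw [pB_add_int, pB_neg _ _ hcond]

/-- the `wSum` with a general real multiplier in place of `r/q` -/
def wAux {s : ℕ} (F : MvPolynomial (Fin s) ℤ) (I₁ I₂ : Finset (Fin s)) (τ : Fin s → ℕ)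
    (P : ℝ) (q : ℕ) (t : ℝ) : ℂ :=
  ∑ z : Fin s → Fin q,
    eC (t * evalR F (fun i => ((z i : ℕ) : ℝ))) *
      ((((∏ i ∈ I₁, (-1 : ℝ) ^ (τ i + 1) / (Nat.factorial (τ i + 1) : ℝ) *
            pB (τ i + 1) ((P * 1 - ((z i : ℕ) : ℝ)) / (q : ℝ))) *
        ∏ i ∈ I₂, (-1 : ℝ) ^ (τ i) / (Nat.factorial (τ i + 1) : ℝ) *
            pB (τ i + 1) ((P * (-1) - ((z i : ℕ) : ℝ)) / (q : ℝ))) : ℝ) : ℂ)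

theorem wSum_orig_eq_wAux {s : ℕ} (F : MvPolynomial (Fin s) ℤ) (I₁ I₂ : Finset (Fin s))
    (τ : Fin s → ℕ) (P : ℝ) (q r : ℕ) :
    wSum F I₁ I₂ τ (fun _ => (-1 : ℝ)) (fun _ => (1 : ℝ)) P r q
      = wAux F I₁ I₂ τ P q ((r : ℝ) / (q : ℝ)) := rfl

theorem wAux_congr {s : ℕ} (F : MvPolynomial (Fin s) ℤ) (I₁ I₂ : Finset (Fin s))
    (τ : Fin s → ℕ) (P : ℝ) (q : ℕ) (t₁ t₂ : ℝ)
    (h : ∀ z : Fin s → Fin q, ∃ m : ℤ,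
      t₁ * ((MvPolynomial.eval (fun i => ((z i : ℕ) : ℤ)) F : ℤ) : ℝ)
        = t₂ * ((MvPolynomial.eval (fun i => ((z i : ℕ) : ℤ)) F : ℤ) : ℝ) + m) :
    wAux F I₁ I₂ τ P q t₁ = wAux F I₁ I₂ τ P q t₂ := by
  unfold wAux
  apply Finset.sum_congr rfl
  intro z _
  congr 1
  have hcast : (fun i => ((z i : ℕ) : ℝ)) = fun i => ((((z i : ℕ) : ℤ)) : ℝ) := by
    funext i; simp
  rw [hcast, evalR_int]
  obtain ⟨m, hm⟩ := h z
  rw [hm, eC_add_int]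

theorem eval_negFin_modEq {s d : ℕ} (F : MvPolynomial (Fin s) ℤ) (hF : F.IsHomogeneous d)
    (q : ℕ) (z : Fin s → Fin q) :
    ∃ k : ℤ, MvPolynomial.eval (fun i => (((negFin q (z i)).val : ℕ) : ℤ)) F
      = (-1 : ℤ) ^ d * MvPolynomial.eval (fun i => ((z i : ℕ) : ℤ)) F + q * k := by
  have hc : ∀ i, (((negFin q (z i)).val : ℕ) : ℤ) ≡ -(((z i : ℕ) : ℤ)) [ZMOD (q : ℤ)] := by
    intro i
    obtain ⟨k, hk⟩ := negFin_val q (z i)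
    rw [hk]
    calc k * q - ((z i : ℕ) : ℤ) ≡ 0 - ((z i : ℕ) : ℤ) [ZMOD (q : ℤ)] :=
          Int.ModEq.sub_right _ ((Int.modEq_zero_iff_dvd).mpr ⟨k, mul_comm k (q : ℤ)⟩)
      _ = -(((z i : ℕ) : ℤ)) := by ring
  have h1 := eval_modEq F q _ _ hc
  rw [eval_neg_of_homog hF] at h1
  obtain ⟨k, hk⟩ := Int.ModEq.dvd h1
  exact ⟨-k, by rw [mul_neg]; linarith⟩

theorem neg_one_sq_pow (R : Type*) [CommRing R] (n : ℕ) :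
    ((-1 : R) ^ n) * ((-1 : R) ^ n) = 1 := by
  rw [← pow_add, ← two_mul, pow_mul]
  simp

theorem sign_prod_key (a₁ a₂ : ℝ) (n₁ n₂ : ℕ) :
    (a₂ * a₁ : ℝ) = ((-1 : ℝ) ^ (n₁ + n₂)) *
      (((-1 : ℝ) ^ n₁ * a₁) * ((-1 : ℝ) ^ n₂ * a₂)) := by
  have S : (-1 : ℝ) ^ (n₁ + n₂) * ((-1 : ℝ) ^ n₁ * (-1 : ℝ) ^ n₂) = 1 := by
    rw [pow_add, show (-1 : ℝ) ^ n₁ * (-1 : ℝ) ^ n₂ * ((-1 : ℝ) ^ n₁ * (-1 : ℝ) ^ n₂)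
        = ((-1 : ℝ) ^ n₁ * (-1 : ℝ) ^ n₁) * ((-1 : ℝ) ^ n₂ * (-1 : ℝ) ^ n₂) from by ring,
      neg_one_sq_pow, neg_one_sq_pow, one_mul]
  linear_combination (-(a₁ * a₂)) * S

theorem wSum_swap {s d : ℕ} (F : MvPolynomial (Fin s) ℤ) (hF : F.IsHomogeneous d)
    (I₁ I₂ : Finset (Fin s)) (hdisj : Disjoint I₁ I₂) (τ : Fin s → ℕ)
    (hτ : ∀ i, i ∉ I₁ ∪ I₂ → τ i = 0) (P : ℝ)
    (hP : Irrational P ∨ ∀ i ∈ I₁ ∪ I₂, 0 < τ i) (q r : ℕ) (hq : q ≠ 0) :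
    wSum F I₂ I₁ τ (fun _ => (-1 : ℝ)) (fun _ => (1 : ℝ)) P r q
      = (-1 : ℂ) ^ (∑ i, τ i) * wAux F I₁ I₂ τ P q ((-1 : ℝ) ^ d * ((r : ℝ) / (q : ℝ))) := by
  have hq' : (q : ℝ) ≠ 0 := Nat.cast_ne_zero.mpr hq
  simp only [wAux, Finset.mul_sum, wSum]
  refine Fintype.sum_bijective (fun z : Fin s → Fin q => fun i => negFin q (z i))
    (Function.Involutive.bijective (fun z => funext fun i => negFin_invol q (z i))) _ _ ?_
  intro z
  simp only []
  obtain ⟨k, hk⟩ := eval_negFin_modEq F hF q z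
  have hcast : ∀ v : Fin s → Fin q,
      (fun i => ((v i : ℕ) : ℝ)) = fun i => ((((v i : ℕ) : ℤ)) : ℝ) := by
    intro v; funext i; simp
  have heC : eC ((r : ℝ) / (q : ℝ) * evalR F (fun i => ((z i : ℕ) : ℝ)))
      = eC ((-1 : ℝ) ^ d * ((r : ℝ) / (q : ℝ)) *
          evalR F (fun i => (((negFin q (z i)) : ℕ) : ℝ))) := by
    rw [hcast z, hcast (fun i => negFin q (z i)), evalR_int, evalR_int, hk]
    rw [show ((-1 : ℝ) ^ d * ((r : ℝ) / (q : ℝ)) *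
          ((((-1 : ℤ) ^ d * MvPolynomial.eval (fun i => ((z i : ℕ) : ℤ)) F + q * k : ℤ)) : ℝ))
        = (r : ℝ) / (q : ℝ) * ((MvPolynomial.eval (fun i => ((z i : ℕ) : ℤ)) F : ℤ) : ℝ)
          + (((-1 : ℤ) ^ d * r * k : ℤ) : ℝ) from by
      push_cast
      rcases Nat.even_or_odd d with he | ho
      · rw [he.neg_one_pow]; field_simp
      · rw [ho.neg_one_pow]; field_simp; ring]
    rw [eC_add_int]
  have hprod₁ : (∏ i ∈ I₁, (-1 : ℝ) ^ (τ i + 1) / (Nat.factorial (τ i + 1) : ℝ) *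
        pB (τ i + 1) ((P * 1 - (((negFin q (z i)) : ℕ) : ℝ)) / (q : ℝ)))
      = (-1 : ℝ) ^ (∑ i ∈ I₁, τ i) *
        ∏ i ∈ I₁, (-1 : ℝ) ^ (τ i) / (Nat.factorial (τ i + 1) : ℝ) *
          pB (τ i + 1) ((P * (-1) - ((z i : ℕ) : ℝ)) / (q : ℝ)) := by
    rw [← Finset.prod_pow_eq_pow_sum, ← Finset.prod_mul_distrib]
    apply Finset.prod_congr rfl
    intro i hi
    obtain ⟨k', hk'⟩ := negFin_val q (z i)
    have hcond : Int.fract ((P * (-1) - ((z i : ℕ) : ℝ)) / (q : ℝ)) ≠ 0 ∨ 2 ≤ τ i + 1 := by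
      rcases hP with hirr | hpos
      · refine Or.inl (fract_div_ne_zero ?_ q hq)
        rw [show P * (-1) - ((z i : ℕ) : ℝ) = -P - ((z i : ℕ) : ℝ) by ring]
        exact (hirr.neg).sub_natCast _
      · exact Or.inr (by have := hpos i (Finset.mem_union_left _ hi); omega)
    rw [pB_shift_b (τ i + 1) P q hq (z i : ℕ) ((negFin q (z i) : ℕ)) k' hk' hcond, pow_succ]
    ring
  have hprod₂ : (∏ i ∈ I₂, (-1 : ℝ) ^ (τ i) / (Nat.factorial (τ i + 1) : ℝ) *
        pB (τ i + 1) ((P * (-1) - (((negFin q (z i)) : ℕ) : ℝ)) / (q : ℝ)))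
      = (-1 : ℝ) ^ (∑ i ∈ I₂, τ i) *
        ∏ i ∈ I₂, (-1 : ℝ) ^ (τ i + 1) / (Nat.factorial (τ i + 1) : ℝ) *
          pB (τ i + 1) ((P * 1 - ((z i : ℕ) : ℝ)) / (q : ℝ)) := by
    rw [← Finset.prod_pow_eq_pow_sum, ← Finset.prod_mul_distrib]
    apply Finset.prod_congr rfl
    intro i hi
    obtain ⟨k', hk'⟩ := negFin_val q (z i)
    have hcond : Int.fract ((P * 1 - ((z i : ℕ) : ℝ)) / (q : ℝ)) ≠ 0 ∨ 2 ≤ τ i + 1 := by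
      rcases hP with hirr | hpos
      · refine Or.inl (fract_div_ne_zero ?_ q hq)
        rw [show P * 1 - ((z i : ℕ) : ℝ) = P - ((z i : ℕ) : ℝ) by ring]
        exact hirr.sub_natCast _
      · exact Or.inr (by have := hpos i (Finset.mem_union_right _ hi); omega)
    rw [pB_shift_a (τ i + 1) P q hq (z i : ℕ) ((negFin q (z i) : ℕ)) k' hk' hcond, pow_succ]
    ring
  have hsum : (∑ i ∈ I₁, τ i) + (∑ i ∈ I₂, τ i) = ∑ i, τ i := by
    rw [← Finset.sum_union hdisj]
    exact Finset.sum_subset (Finset.subset_univ _) (fun i _ hi => hτ i hi)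
  rw [heC, hprod₁, hprod₂, ← hsum]
  have kc := sign_prod_key
    (∏ i ∈ I₁, (-1 : ℝ) ^ (τ i) / (Nat.factorial (τ i + 1) : ℝ) *
      pB (τ i + 1) ((P * (-1) - ((z i : ℕ) : ℝ)) / (q : ℝ)))
    (∏ i ∈ I₂, (-1 : ℝ) ^ (τ i + 1) / (Nat.factorial (τ i + 1) : ℝ) *
      pB (τ i + 1) ((P * 1 - ((z i : ℕ) : ℝ)) / (q : ℝ)))
    (∑ i ∈ I₁, τ i) (∑ i ∈ I₂, τ i)
  rw [kc]
  push_cast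
  ring

theorem rsum_swap {s : ℕ} (F : MvPolynomial (Fin s) ℤ) (I₁ I₂ : Finset (Fin s))
    (τ : Fin s → ℕ) (P : ℝ) (d q : ℕ) (hq : q ≠ 0) :
    ∑ r ∈ (Finset.Icc 1 q).filter (fun r => Nat.Coprime r q),
        wAux F I₁ I₂ τ P q ((-1 : ℝ) ^ d * ((r : ℝ) / (q : ℝ)))
      = ∑ r ∈ (Finset.Icc 1 q).filter (fun r => Nat.Coprime r q),
          wAux F I₁ I₂ τ P q ((r : ℝ) / (q : ℝ)) := by
  rcases Nat.even_or_odd d with he | ho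
  · apply Finset.sum_congr rfl
    intro r _
    rw [he.neg_one_pow, one_mul]
  · rcases eq_or_ne q 1 with rfl | hq1
    · rw [show (Finset.Icc 1 1).filter (fun r => Nat.Coprime r 1) = {1} from by decide]
      rw [Finset.sum_singleton, Finset.sum_singleton, ho.neg_one_pow]
      apply wAux_congr
      intro z
      exact ⟨-2 * MvPolynomial.eval (fun i => ((z i : ℕ) : ℤ)) F, by push_cast; ring⟩
    · have hq2 : 2 ≤ q := by omega
      have hmem : ∀ r ∈ (Finset.Icc 1 q).filter (fun r => Nat.Coprime r q),
          q - r ∈ (Finset.Icc 1 q).filter (fun r => Nat.Coprime r q) := by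
        intro r hr
        rw [Finset.mem_filter, Finset.mem_Icc] at hr ⊢
        have hrq : r < q := by
          rcases eq_or_lt_of_le hr.1.2 with h | h
          · exfalso
            have h1 : Nat.Coprime q q := h ▸ hr.2
            have h2 : q = 1 := by simpa using h1
            omega
          · exact h
        exact ⟨⟨by omega, by omega⟩, coprime_q_sub hr.1.2 hr.2⟩
      refine Finset.sum_nbij' (fun r => q - r) (fun r => q - r)
        hmem hmem ?_ ?_ ?_
      · intro r hr
        rw [Finset.mem_filter, Finset.mem_Icc] at hr
        show q - (q - r) = r
        omega
      · intro r hr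
        rw [Finset.mem_filter, Finset.mem_Icc] at hr
        show q - (q - r) = r
        omega
      · intro r hr
        rw [Finset.mem_filter, Finset.mem_Icc] at hr
        have hrq : r ≤ q := hr.1.2
        beta_reduce
        rw [ho.neg_one_pow]
        apply wAux_congr
        intro z
        refine ⟨-(MvPolynomial.eval (fun i => ((z i : ℕ) : ℤ)) F), ?_⟩
        have hc : (((q - r : ℕ)) : ℝ) = (q : ℝ) - r := by push_cast [hrq]; ring
        rw [hc]
        have hq' : (q : ℝ) ≠ 0 := Nat.cast_ne_zero.mpr hq
        push_cast
        field_simp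
        ring

theorem ssTerm_swap {s d : ℕ} (F : MvPolynomial (Fin s) ℤ) (hF : F.IsHomogeneous d)
    (I₁ I₂ : Finset (Fin s)) (hdisj : Disjoint I₁ I₂) (τ : Fin s → ℕ)
    (hτ : ∀ i, i ∉ I₁ ∪ I₂ → τ i = 0) (P : ℝ)
    (hP : Irrational P ∨ ∀ i ∈ I₁ ∪ I₂, 0 < τ i) (q : ℕ) :
    ssTerm F I₂ I₁ τ (fun _ => (-1 : ℝ)) (fun _ => (1 : ℝ)) P 0 q
      = (-1 : ℂ) ^ (∑ i, τ i) *
        ssTerm F I₁ I₂ τ (fun _ => (-1 : ℝ)) (fun _ => (1 : ℝ)) P 0 q := by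
  rcases Nat.eq_zero_or_pos q with rfl | hqpos
  · simp [ssTerm]
  have hq0 : q ≠ 0 := by omega
  have h3 : I3F I₂ I₁ = I3F I₁ I₂ := by simp [I3F, Finset.union_comm]
  simp only [ssTerm, Int.cast_zero, mul_zero, neg_zero, eC_zero, mul_one, h3]
  calc ∑ r ∈ (Finset.Icc 1 q).filter (fun r => Nat.Coprime r q),
        (q : ℂ) ^ (-(((I3F I₁ I₂).card : ℤ)) + ∑ i, (τ i : ℤ)) *
          wSum F I₂ I₁ τ (fun _ => (-1 : ℝ)) (fun _ => (1 : ℝ)) P r q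
      = (-1 : ℂ) ^ (∑ i, τ i) * ∑ r ∈ (Finset.Icc 1 q).filter (fun r => Nat.Coprime r q),
          (q : ℂ) ^ (-(((I3F I₁ I₂).card : ℤ)) + ∑ i, (τ i : ℤ)) *
            wAux F I₁ I₂ τ P q ((-1 : ℝ) ^ d * ((r : ℝ) / (q : ℝ))) := by
        rw [Finset.mul_sum]
        apply Finset.sum_congr rfl
        intro r _
        rw [wSum_swap F hF I₁ I₂ hdisj τ hτ P hP q r hq0]
        ring
    _ = (-1 : ℂ) ^ (∑ i, τ i) * ∑ r ∈ (Finset.Icc 1 q).filter (fun r => Nat.Coprime r q),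
          (q : ℂ) ^ (-(((I3F I₁ I₂).card : ℤ)) + ∑ i, (τ i : ℤ)) *
            wAux F I₁ I₂ τ P q ((r : ℝ) / (q : ℝ)) := by
        congr 1
        rw [← Finset.mul_sum, ← Finset.mul_sum, rsum_swap F I₁ I₂ τ P d q hq0]
    _ = (-1 : ℂ) ^ (∑ i, τ i) * ∑ r ∈ (Finset.Icc 1 q).filter (fun r => Nat.Coprime r q),
          (q : ℂ) ^ (-(((I3F I₁ I₂).card : ℤ)) + ∑ i, (τ i : ℤ)) *
            wSum F I₁ I₂ τ (fun _ => (-1 : ℝ)) (fun _ => (1 : ℝ)) P r q := rfl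

end Aux2

/-- Symmetry of the generalized singular integrals and singular series under the
duality `(I₁, I₂, τ) ↦ (I₂, I₁, τ)`, in the setting of Theorem 2 where `n = 0`
and `B = [-1,1]^s`. -/
theorem statement_18 (s d : ℕ) (hd : 1 ≤ d)
    (F : MvPolynomial (Fin s) ℤ) (hF : F.IsHomogeneous d)
    (I₁ I₂ : Finset (Fin s)) (τ : Fin s → ℕ) (hdisj : Disjoint I₁ I₂)
    (hτ : ∀ i, i ∉ I₁ ∪ I₂ → τ i = 0)
    (hint : MeasureTheory.Integrable
      (fun γ : ℝ => JInt F I₁ I₂ τ (fun _ => (-1 : ℝ)) (fun _ => (1 : ℝ)) γ))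
    (hint' : MeasureTheory.Integrable
      (fun γ : ℝ => JInt F I₂ I₁ τ (fun _ => (-1 : ℝ)) (fun _ => (1 : ℝ)) γ)) :
    calJ F I₂ I₁ τ (fun _ => (-1 : ℝ)) (fun _ => (1 : ℝ)) 0 =
        (-1 : ℂ) ^ (∑ i, τ i) * calJ F I₁ I₂ τ (fun _ => (-1 : ℝ)) (fun _ => (1 : ℝ)) 0 ∧
      ∀ P : ℝ, (Irrational P ∨ ∀ i ∈ I₁ ∪ I₂, 0 < τ i) →
        singSeries F I₂ I₁ τ (fun _ => (-1 : ℝ)) (fun _ => (1 : ℝ)) P 0 =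
          (-1 : ℂ) ^ (∑ i, τ i) *
            singSeries F I₁ I₂ τ (fun _ => (-1 : ℝ)) (fun _ => (1 : ℝ)) P 0 := by
  have h3 : I3F I₂ I₁ = I3F I₁ I₂ := by
    simp [I3F, Finset.union_comm]
  constructor
  · -- singular integral half
    have hbridge : ∀ (J₁ J₂ : Finset (Fin s)) (γ : ℝ),
        JInt F J₁ J₂ τ (fun _ => (-1 : ℝ)) (fun _ => (1 : ℝ)) γ
          = JIntGen F τ (I3F J₁ J₂) (fun i => if i ∈ J₁ then (1 : ℝ) else -1) γ :=
      fun _ _ _ => rfl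
    have hswap : ∀ γ : ℝ, JInt F I₂ I₁ τ (fun _ => (-1 : ℝ)) (fun _ => (1 : ℝ)) γ
        = (-1 : ℂ) ^ (∑ i, τ i) *
            JInt F I₁ I₂ τ (fun _ => (-1 : ℝ)) (fun _ => (1 : ℝ)) ((-1 : ℝ) ^ d * γ) := by
      intro γ
      rw [hbridge, hbridge, h3]
      apply JIntGen_neg F hF τ
      intro i hi
      rw [I3F] at hi
      simp only [Finset.mem_sdiff, Finset.mem_univ, true_and, not_not] at hi
      rcases Finset.mem_union.mp hi with h1 | h2
      · have h2' : i ∉ I₂ := fun h => Finset.disjoint_left.mp hdisj h1 h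
        simp [h1, h2']
      · have h1' : i ∉ I₁ := fun h => Finset.disjoint_left.mp hdisj h h2
        simp [h2, h1']
    calc calJ F I₂ I₁ τ (fun _ => (-1 : ℝ)) (fun _ => (1 : ℝ)) 0
        = ∫ γ : ℝ, JInt F I₂ I₁ τ (fun _ => (-1 : ℝ)) (fun _ => (1 : ℝ)) γ := by
          rw [calJ]; congr 1; funext γ; rw [mul_zero, neg_zero, eC_zero, mul_one]
      _ = ∫ γ : ℝ, (-1 : ℂ) ^ (∑ i, τ i) *
            JInt F I₁ I₂ τ (fun _ => (-1 : ℝ)) (fun _ => (1 : ℝ)) ((-1 : ℝ) ^ d * γ) := by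
          congr 1; funext γ; rw [hswap]
      _ = (-1 : ℂ) ^ (∑ i, τ i) * ∫ γ : ℝ,
            JInt F I₁ I₂ τ (fun _ => (-1 : ℝ)) (fun _ => (1 : ℝ)) ((-1 : ℝ) ^ d * γ) :=
          MeasureTheory.integral_const_mul _ _
      _ = (-1 : ℂ) ^ (∑ i, τ i) * ∫ γ : ℝ,
            JInt F I₁ I₂ τ (fun _ => (-1 : ℝ)) (fun _ => (1 : ℝ)) γ := by
          rcases Nat.even_or_odd d with he | ho
          · rw [he.neg_one_pow]; simp
          · rw [ho.neg_one_pow]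
            congr 1
            have hni := MeasureTheory.integral_neg_eq_self
              (fun γ : ℝ => JInt F I₁ I₂ τ (fun _ => (-1 : ℝ)) (fun _ => (1 : ℝ)) γ) volume
            simpa [neg_one_mul] using hni
      _ = (-1 : ℂ) ^ (∑ i, τ i) * calJ F I₁ I₂ τ (fun _ => (-1 : ℝ)) (fun _ => (1 : ℝ)) 0 := by
          rw [calJ]; congr 2; funext γ; rw [mul_zero, neg_zero, eC_zero, mul_one]
  · -- singular series half
    intro P hP
    rw [singSeries, singSeries,
      tsum_congr (fun q => ssTerm_swap F hF I₁ I₂ hdisj τ hτ P hP q), tsum_mul_left]
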